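/- arXiv:funct-an/9709006 — 3 statements merged into one kernel-verified Lean document; each statement's English description precedes it below -/
import Mathlib

section
/- For any bounded operator x in a von Neumann algebra M with cyclic separating vector Ω and modular operator Δ, one has ‖Δ^{1/4} x Ω‖ ≤ (1/√2) · (‖xΩ‖² + ‖x*Ω‖²)^{1/2}; consequently the map x ↦ Δ^{1/4} x Ω is continuous from M with the strong-* operator topology to the Hilbert space norm topology. -/
open scoped ComplexInnerProductSpace Topology

/-- For `x` in a von Neumann algebra `M` with cyclic separating vector `Ω`,
modular operator `Δ` (with conjugation `J`, `Δ^{1/2} xΩ = J x* Ω`), one has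
`‖Δ^{1/4} x Ω‖ ≤ (1/√2)·(‖xΩ‖² + ‖x*Ω‖²)^{1/2}`; consequently `x ↦ Δ^{1/4} x Ω` is
continuous from the strong-* topology (here: sequential strong-* convergence, encoded
through convergence of `xₙΩ` and `xₙ*Ω`) to the norm topology. -/
theorem stmt_1
    {H : Type*} [NormedAddCommGroup H] [InnerProductSpace ℂ H] [CompleteSpace H]
    (M : VonNeumannAlgebra H) (Ω : H)
    (J : H →ₗ⋆[ℂ] H) (A14 A12 : H →ₗ[ℂ] H)
    (hJiso : ∀ ξ : H, ‖J ξ‖ = ‖ξ‖)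
    (hroot : ∀ x : H →L[ℂ] H, x ∈ M →
      ⟪A14 (x Ω), A14 (x Ω)⟫ = ⟪A12 (x Ω), x Ω⟫)
    (hmod : ∀ x : H →L[ℂ] H, x ∈ M →
      A12 (x Ω) = J (ContinuousLinearMap.adjoint x Ω)) :
    (∀ x : H →L[ℂ] H, x ∈ M →
      ‖A14 (x Ω)‖ ≤ (1 / Real.sqrt 2) *
        Real.sqrt (‖x Ω‖ ^ 2 + ‖ContinuousLinearMap.adjoint x Ω‖ ^ 2)) ∧
    (∀ (u : ℕ → H →L[ℂ] H) (x : H →L[ℂ] H), (∀ n, u n ∈ M) → x ∈ M →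
      Filter.Tendsto (fun n => (u n) Ω) Filter.atTop (𝓝 (x Ω)) →
      Filter.Tendsto (fun n => ContinuousLinearMap.adjoint (u n) Ω) Filter.atTop
        (𝓝 (ContinuousLinearMap.adjoint x Ω)) →
      Filter.Tendsto (fun n => A14 ((u n) Ω)) Filter.atTop (𝓝 (A14 (x Ω)))) := by
  have key : ∀ x : H →L[ℂ] H, x ∈ M →
      ‖A14 (x Ω)‖ ≤ (1 / Real.sqrt 2) *
        Real.sqrt (‖x Ω‖ ^ 2 + ‖ContinuousLinearMap.adjoint x Ω‖ ^ 2) := by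
    intro x hx
    set a := ‖x Ω‖
    set b := ‖ContinuousLinearMap.adjoint x Ω‖
    have hA12 : ‖A12 (x Ω)‖ = b := by rw [hmod x hx, hJiso]
    have hsq : ‖A14 (x Ω)‖ ^ 2 ≤ b * a := by
      have h1 : (‖A14 (x Ω)‖ : ℝ) ^ 2 = (⟪A14 (x Ω), A14 (x Ω)⟫ : ℂ).re := by
        rw [inner_self_eq_norm_sq_to_K (𝕜 := ℂ)]; norm_cast
      rw [h1, hroot x hx]
      calc (⟪A12 (x Ω), x Ω⟫ : ℂ).re ≤ ‖(⟪A12 (x Ω), x Ω⟫ : ℂ)‖ := Complex.re_le_norm _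
        _ ≤ ‖A12 (x Ω)‖ * ‖x Ω‖ := norm_inner_le_norm _ _
        _ = b * a := by rw [hA12]
    have hba : b * a ≤ (a ^ 2 + b ^ 2) / 2 := by nlinarith [sq_nonneg (a - b)]
    have hfin : ‖A14 (x Ω)‖ ^ 2 ≤ (a ^ 2 + b ^ 2) / 2 := hsq.trans hba
    have hrhs : (1 / Real.sqrt 2) * Real.sqrt (a ^ 2 + b ^ 2)
        = Real.sqrt ((a ^ 2 + b ^ 2) / 2) := by
      rw [one_div, ← Real.sqrt_inv, ← Real.sqrt_mul (by positivity), inv_mul_eq_div]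
    rw [hrhs, show ‖A14 (x Ω)‖ = Real.sqrt (‖A14 (x Ω)‖ ^ 2) from
      (Real.sqrt_sq (norm_nonneg _)).symm]
    exact Real.sqrt_le_sqrt hfin
  refine ⟨key, ?_⟩
  intro u x hu hx h1 h2
  have h3 : Filter.Tendsto (fun n => ‖A14 ((u n) Ω) - A14 (x Ω)‖) Filter.atTop (𝓝 0) := by
    have hb : ∀ n, ‖A14 ((u n) Ω) - A14 (x Ω)‖ ≤ (1 / Real.sqrt 2) *
        Real.sqrt (‖(u n) Ω - x Ω‖ ^ 2 +
          ‖ContinuousLinearMap.adjoint (u n) Ω - ContinuousLinearMap.adjoint x Ω‖ ^ 2) := by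
      intro n
      have hmem : u n - x ∈ M := sub_mem (hu n) hx
      have := key (u n - x) hmem
      simpa [map_sub, ContinuousLinearMap.sub_apply] using this
    have hlim : Filter.Tendsto (fun n => (1 / Real.sqrt 2) *
        Real.sqrt (‖(u n) Ω - x Ω‖ ^ 2 +
          ‖ContinuousLinearMap.adjoint (u n) Ω - ContinuousLinearMap.adjoint x Ω‖ ^ 2))
        Filter.atTop (𝓝 0) := by
      have t1 : Filter.Tendsto (fun n => ‖(u n) Ω - x Ω‖) Filter.atTop (𝓝 0) :=
        tendsto_zero_iff_norm_tendsto_zero.mp (tendsto_sub_nhds_zero_iff.mpr h1)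
      have t2 : Filter.Tendsto
          (fun n => ‖ContinuousLinearMap.adjoint (u n) Ω - ContinuousLinearMap.adjoint x Ω‖)
          Filter.atTop (𝓝 0) :=
        tendsto_zero_iff_norm_tendsto_zero.mp (tendsto_sub_nhds_zero_iff.mpr h2)
      have ts : Filter.Tendsto (fun n => ‖(u n) Ω - x Ω‖ ^ 2 +
          ‖ContinuousLinearMap.adjoint (u n) Ω - ContinuousLinearMap.adjoint x Ω‖ ^ 2)
          Filter.atTop (𝓝 0) := by
        simpa using (t1.pow 2).add (t2.pow 2)
      have := ((Real.continuous_sqrt.tendsto 0).comp ts).const_mul (1 / Real.sqrt 2)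
      simpa [Function.comp] using this
    exact squeeze_zero (fun n => norm_nonneg _) hb hlim
  have := tendsto_sub_nhds_zero_iff.mp (tendsto_zero_iff_norm_tendsto_zero.mpr h3)
  exact this
end

section
/- Haagerup's tensor norm inequality: for finitely many matrices a_σ ∈ M_m(ℂ) and b_σ ∈ M_n(ℂ) (σ ranging over a finite index set), one has ‖Σ_σ a_σ ⊗ conj(b_σ)‖ ≤ ‖Σ_σ a_σ ⊗ conj(a_σ)‖^{1/2} · ‖Σ_σ b_σ ⊗ conj(b_σ)‖^{1/2}, where conj denotes the entrywise complex conjugate matrix and the norms are operator norms on ℂ^m ⊗ ℂ^n, ℂ^m ⊗ ℂ^m, ℂ^n ⊗ ℂ^n respectively. -/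
open scoped Kronecker Matrix.Norms.L2Operator

namespace HaagerupAux

open Matrix

noncomputable section

set_option linter.unusedSectionVars false

local notation "𝕔" => starRingEnd ℂ

universe u

section Frob

variable {p q p' q' : Type*} [Fintype p] [Fintype q] [Fintype p'] [Fintype q']
  [DecidableEq p] [DecidableEq q] [DecidableEq p'] [DecidableEq q']

/-- squared Frobenius norm -/
def frobSq (M : Matrix p q ℂ) : ℝ := ∑ i, ∑ j, ‖M i j‖ ^ 2

lemma frobSq_nonneg (M : Matrix p q ℂ) : 0 ≤ frobSq M := by
  unfold frobSq; positivity

lemma opNorm_le_sqrt_frobSq (M : Matrix p q ℂ) : ‖M‖ ≤ Real.sqrt (frobSq M) := by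
  rw [Matrix.l2_opNorm_def]
  refine ContinuousLinearMap.opNorm_le_bound _ (Real.sqrt_nonneg _) fun v => ?_
  rw [LinearEquiv.trans_apply, LinearMap.coe_toContinuousLinearMap']
  rw [EuclideanSpace.norm_eq, EuclideanSpace.norm_eq (𝕜 := ℂ) v]
  rw [← Real.sqrt_mul (frobSq_nonneg M)]
  apply Real.sqrt_le_sqrt
  have key : ∀ i, ‖(Matrix.toEuclideanLin M v) i‖ ^ 2 ≤
      (∑ j, ‖M i j‖ ^ 2) * ∑ j, ‖v j‖ ^ 2 := by
    intro i
    have h1 : (Matrix.toEuclideanLin M v) i = ∑ j, M i j * v j := by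
      simp [Matrix.toEuclideanLin_apply, Matrix.mulVec, dotProduct]
    set x : EuclideanSpace ℂ q := (WithLp.equiv 2 (q → ℂ)).symm (fun j => (starRingEnd ℂ) (M i j))
    have h2 : (inner ℂ x v : ℂ) = ∑ j, M i j * v j := by
      simp [x, PiLp.inner_apply, RCLike.inner_apply, mul_comm]
    have h3 : ‖(Matrix.toEuclideanLin M v) i‖ ≤ ‖x‖ * ‖v‖ := by
      rw [h1, ← h2]; exact norm_inner_le_norm x v
    have h4 : ‖x‖ ^ 2 = ∑ j, ‖M i j‖ ^ 2 := by
      rw [EuclideanSpace.norm_eq, Real.sq_sqrt (by positivity)]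
      simp [x]
    calc ‖(Matrix.toEuclideanLin M v) i‖ ^ 2 ≤ (‖x‖ * ‖v‖) ^ 2 := by
          apply pow_le_pow_left₀ (norm_nonneg _) h3
      _ = ‖x‖ ^ 2 * ‖v‖ ^ 2 := by ring
      _ = (∑ j, ‖M i j‖ ^ 2) * ∑ j, ‖v j‖ ^ 2 := by
          rw [h4, EuclideanSpace.norm_eq, Real.sq_sqrt (by positivity)]
  calc ∑ i, ‖(Matrix.toEuclideanLin M v) i‖ ^ 2
      ≤ ∑ i, (∑ j, ‖M i j‖ ^ 2) * ∑ j, ‖v j‖ ^ 2 := Finset.sum_le_sum fun i _ => key i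
    _ = frobSq M * ∑ j, ‖v j‖ ^ 2 := by rw [frobSq, Finset.sum_mul]

lemma frobSq_kronecker (M : Matrix p q ℂ) (N : Matrix p' q' ℂ) :
    frobSq (M ⊗ₖ N) = frobSq M * frobSq N := by
  simp only [frobSq, kroneckerMap_apply, norm_mul, mul_pow, Fintype.sum_prod_type]
  rw [Finset.sum_mul_sum]
  congr 1; ext i
  congr 1; ext k
  rw [Finset.sum_mul_sum]

lemma frobSq_one : frobSq (1 : Matrix p p ℂ) = Fintype.card p := by
  simp only [frobSq, Matrix.one_apply]
  simp only [apply_ite (fun z : ℂ => ‖z‖ ^ 2), norm_one, one_pow, norm_zero]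
  simp [Finset.sum_ite_eq']

lemma frobSq_map_conj (M : Matrix p q ℂ) :
    frobSq (M.map 𝕔) = frobSq M := by
  simp [frobSq]

end Frob

section Helpers

variable {ι : Type u} {p q : Type*} [Fintype p] [Fintype q] [DecidableEq p] [DecidableEq q]

lemma kron_conjTranspose (A : Matrix p p ℂ) (B : Matrix q q ℂ) :
    (A ⊗ₖ B)ᴴ = Aᴴ ⊗ₖ Bᴴ := by
  ext ⟨i, k⟩ ⟨j, l⟩
  simp [conjTranspose_apply, kroneckerMap_apply, mul_comm]

lemma map_conj_conjTranspose (B : Matrix q q ℂ) :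
    (B.map 𝕔)ᴴ = Bᴴ.map 𝕔 := by
  ext i j
  simp [conjTranspose_apply]

lemma sum_kron {s : Finset ι} (f : ι → Matrix p p ℂ) (N : Matrix q q ℂ) :
    ∑ σ ∈ s, (f σ) ⊗ₖ N = (∑ σ ∈ s, f σ) ⊗ₖ N := by
  ext ⟨i, k⟩ ⟨j, l⟩
  simp [kroneckerMap_apply, Matrix.sum_apply, Finset.sum_mul]

lemma kron_sum {s : Finset ι} (M : Matrix p p ℂ) (f : ι → Matrix q q ℂ) :
    ∑ σ ∈ s, M ⊗ₖ (f σ) = M ⊗ₖ (∑ σ ∈ s, f σ) := by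
  ext ⟨i, k⟩ ⟨j, l⟩
  simp [kroneckerMap_apply, Matrix.sum_apply, Finset.mul_sum]

lemma sum_map_conj {s : Finset ι} (f : ι → Matrix q q ℂ) :
    ∑ σ ∈ s, (f σ).map 𝕔 = (∑ σ ∈ s, f σ).map 𝕔 := by
  ext i j
  simp [Matrix.sum_apply, map_apply]

lemma norm_mul_conjTranspose_self {r : Type*} [Fintype r] [DecidableEq r]
    (M : Matrix p r ℂ) : ‖M * Mᴴ‖ = ‖M‖ * ‖M‖ := by
  have h2 := Matrix.l2_opNorm_conjTranspose_mul_self Mᴴ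
  rw [Matrix.conjTranspose_conjTranspose, Matrix.l2_opNorm_conjTranspose] at h2
  exact h2

/-- H1: Frobenius norm of `∑ u σ * (v σ)ᴴ` is controlled by the tensor norm. -/
lemma sqrt_frobSq_le (s : Finset ι) (u v : ι → Matrix p p ℂ) :
    Real.sqrt (frobSq (∑ σ ∈ s, u σ * (v σ)ᴴ)) ≤
      Real.sqrt (Fintype.card p) * ‖∑ σ ∈ s, (u σ) ⊗ₖ ((v σ).map 𝕔)‖ := by
  set T : Matrix (p × p) (p × p) ℂ := ∑ σ ∈ s, (u σ) ⊗ₖ ((v σ).map 𝕔) with hT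
  set e : EuclideanSpace ℂ (p × p) :=
    (WithLp.equiv 2 ((p × p) → ℂ)).symm (fun pq => if pq.1 = pq.2 then 1 else 0) with he
  have he_norm : ‖e‖ = Real.sqrt (Fintype.card p) := by
    rw [EuclideanSpace.norm_eq]
    congr 1
    simp only [he, WithLp.equiv_symm_apply, PiLp.toLp_apply]
    rw [Fintype.sum_prod_type]
    have h : ∀ x x1 : p, ‖(if x = x1 then (1:ℂ) else 0)‖ ^ 2
        = if x = x1 then (1:ℝ) else 0 := by
      intro x x1; split <;> simp
    simp [h, Finset.sum_ite_eq']
  have hmul : ∀ x : p × p, (T *ᵥ (fun pq => if pq.1 = pq.2 then 1 else 0)) x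
      = (∑ σ ∈ s, u σ * (v σ)ᴴ) x.1 x.2 := by
    intro ⟨i, j⟩
    simp only [hT, Matrix.mulVec, dotProduct, Matrix.sum_apply, Finset.sum_mul]
    rw [Finset.sum_comm]
    refine Finset.sum_congr rfl fun σ _ => ?_
    rw [Fintype.sum_prod_type, Matrix.mul_apply]
    refine Finset.sum_congr rfl fun k _ => ?_
    simp only [kroneckerMap_apply, map_apply, mul_ite, mul_one, mul_zero]
    rw [Finset.sum_ite_eq Finset.univ k]
    simp [conjTranspose_apply]
  have hv := Matrix.l2_opNorm_mulVec T ((WithLp.equiv 2 ((p × p) → ℂ)).symm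
    (fun pq => if pq.1 = pq.2 then 1 else 0))
  calc Real.sqrt (frobSq (∑ σ ∈ s, u σ * (v σ)ᴴ))
      = ‖(EuclideanSpace.equiv (p × p) ℂ).symm
          (T *ᵥ (fun pq => if pq.1 = pq.2 then 1 else 0))‖ := by
        rw [EuclideanSpace.norm_eq]
        congr 1
        rw [frobSq, Fintype.sum_prod_type]
        refine Finset.sum_congr rfl fun i _ => Finset.sum_congr rfl fun j _ => ?_
        rw [← hmul (i, j)]
        rfl
    _ ≤ ‖T‖ * ‖e‖ := hv
    _ = Real.sqrt (Fintype.card p) * ‖T‖ := by rw [he_norm, mul_comm]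

/-- H4: Cauchy–Schwarz for sums of products of matrices (operator norm). -/
lemma norm_sum_mul_le {N : Type*} [Fintype N] [DecidableEq N]
    (s : Finset ι) (x y : ι → Matrix N N ℂ) :
    ‖∑ σ ∈ s, x σ * y σ‖ ≤
      Real.sqrt ‖∑ σ ∈ s, x σ * (x σ)ᴴ‖ * Real.sqrt ‖∑ σ ∈ s, (y σ)ᴴ * y σ‖ := by
  classical
  set P : Matrix N (↥s × N) ℂ := Matrix.of (fun i p => x p.1 i p.2) with hP
  set Q : Matrix (↥s × N) N ℂ := Matrix.of (fun p j => y p.1 p.2 j) with hQ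
  have hPQ : P * Q = ∑ σ ∈ s, x σ * y σ := by
    ext i j
    rw [Matrix.mul_apply, Matrix.sum_apply, Fintype.sum_prod_type, ← Finset.sum_coe_sort s]
    refine Finset.sum_congr rfl fun σ _ => ?_
    rw [Matrix.mul_apply]
    rfl
  have hPP : P * Pᴴ = ∑ σ ∈ s, x σ * (x σ)ᴴ := by
    ext i j
    rw [Matrix.mul_apply, Matrix.sum_apply, Fintype.sum_prod_type, ← Finset.sum_coe_sort s]
    refine Finset.sum_congr rfl fun σ _ => ?_
    rw [Matrix.mul_apply]
    rfl
  have hQQ : Qᴴ * Q = ∑ σ ∈ s, (y σ)ᴴ * y σ := by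
    ext i j
    rw [Matrix.mul_apply, Matrix.sum_apply, Fintype.sum_prod_type, ← Finset.sum_coe_sort s]
    refine Finset.sum_congr rfl fun σ _ => ?_
    rw [Matrix.mul_apply]
    rfl
  have hPn : ‖P‖ = Real.sqrt ‖∑ σ ∈ s, x σ * (x σ)ᴴ‖ := by
    rw [← hPP, norm_mul_conjTranspose_self, Real.sqrt_mul_self (norm_nonneg _)]
  have hQn : ‖Q‖ = Real.sqrt ‖∑ σ ∈ s, (y σ)ᴴ * y σ‖ := by
    rw [← hQQ, Matrix.l2_opNorm_conjTranspose_mul_self, Real.sqrt_mul_self (norm_nonneg _)]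
  calc ‖∑ σ ∈ s, x σ * y σ‖ = ‖P * Q‖ := by rw [hPQ]
    _ ≤ ‖P‖ * ‖Q‖ := Matrix.l2_opNorm_mul P Q
    _ = _ := by rw [hPn, hQn]

/-- H5: the product identity. -/
lemma prod_identity {m n : ℕ} (s : Finset ι)
    (a a' : ι → Matrix (Fin m) (Fin m) ℂ) (b b' : ι → Matrix (Fin n) (Fin n) ℂ) :
    (∑ σ ∈ s, (a σ) ⊗ₖ ((b σ).map 𝕔)) * (∑ σ ∈ s, (a' σ) ⊗ₖ ((b' σ).map 𝕔))ᴴ =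
      ∑ τ ∈ s ×ˢ s, (a τ.1 * (a' τ.2)ᴴ) ⊗ₖ ((b τ.1 * (b' τ.2)ᴴ).map 𝕔) := by
  rw [Matrix.conjTranspose_sum, Finset.sum_mul_sum, Finset.sum_product]
  refine Finset.sum_congr rfl fun σ _ => Finset.sum_congr rfl fun τ _ => ?_
  rw [kron_conjTranspose, map_conj_conjTranspose, Matrix.map_mul, Matrix.mul_kronecker_mul]

end Helpers

section Main

variable {ι : Type u}

/-- The crude bound, with constant `√m √n`. -/
lemma crude (m n : ℕ) (s : Finset ι)
    (a : ι → Matrix (Fin m) (Fin m) ℂ) (b : ι → Matrix (Fin n) (Fin n) ℂ) :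
    ‖∑ σ ∈ s, (a σ) ⊗ₖ ((b σ).map 𝕔)‖ ≤
      (Real.sqrt m * Real.sqrt n) *
        (Real.sqrt ‖∑ σ ∈ s, (a σ) ⊗ₖ ((a σ).map 𝕔)‖ *
         Real.sqrt ‖∑ σ ∈ s, (b σ) ⊗ₖ ((b σ).map 𝕔)‖) := by
  set x : ι → Matrix (Fin m × Fin n) (Fin m × Fin n) ℂ :=
    fun σ => (a σ) ⊗ₖ (1 : Matrix (Fin n) (Fin n) ℂ) with hx
  set y : ι → Matrix (Fin m × Fin n) (Fin m × Fin n) ℂ :=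
    fun σ => (1 : Matrix (Fin m) (Fin m) ℂ) ⊗ₖ ((b σ).map 𝕔) with hy
  have h0 : ∀ σ, x σ * y σ = (a σ) ⊗ₖ ((b σ).map 𝕔) := by
    intro σ
    rw [hx, hy, ← Matrix.mul_kronecker_mul, mul_one, one_mul]
  have hxx : ∑ σ ∈ s, x σ * (x σ)ᴴ
      = (∑ σ ∈ s, a σ * (a σ)ᴴ) ⊗ₖ (1 : Matrix (Fin n) (Fin n) ℂ) := by
    rw [← sum_kron]
    refine Finset.sum_congr rfl fun σ _ => ?_
    rw [hx, kron_conjTranspose, Matrix.conjTranspose_one, ← Matrix.mul_kronecker_mul, one_mul]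
  have hyy : ∑ σ ∈ s, (y σ)ᴴ * y σ
      = (1 : Matrix (Fin m) (Fin m) ℂ) ⊗ₖ
          ((∑ σ ∈ s, (b σ)ᴴ * ((b σ)ᴴ)ᴴ).map 𝕔) := by
    rw [← sum_map_conj, ← kron_sum]
    refine Finset.sum_congr rfl fun σ _ => ?_
    rw [hy, kron_conjTranspose, Matrix.conjTranspose_one, ← Matrix.mul_kronecker_mul, one_mul,
      map_conj_conjTranspose, ← Matrix.map_mul, Matrix.conjTranspose_conjTranspose]
  have hA : ‖∑ σ ∈ s, x σ * (x σ)ᴴ‖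
      ≤ (Real.sqrt m * Real.sqrt n) * ‖∑ σ ∈ s, (a σ) ⊗ₖ ((a σ).map 𝕔)‖ := by
    rw [hxx]
    calc ‖(∑ σ ∈ s, a σ * (a σ)ᴴ) ⊗ₖ (1 : Matrix (Fin n) (Fin n) ℂ)‖
        ≤ Real.sqrt (frobSq ((∑ σ ∈ s, a σ * (a σ)ᴴ) ⊗ₖ (1 : Matrix (Fin n) (Fin n) ℂ))) :=
          opNorm_le_sqrt_frobSq _
      _ = Real.sqrt (frobSq (∑ σ ∈ s, a σ * (a σ)ᴴ)) * Real.sqrt n := by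
          rw [frobSq_kronecker, frobSq_one, Real.sqrt_mul (frobSq_nonneg _)]
          simp
      _ ≤ (Real.sqrt (Fintype.card (Fin m)) * ‖∑ σ ∈ s, (a σ) ⊗ₖ ((a σ).map 𝕔)‖)
            * Real.sqrt n := by
          apply mul_le_mul_of_nonneg_right (sqrt_frobSq_le s a a) (Real.sqrt_nonneg _)
      _ = (Real.sqrt m * Real.sqrt n) * ‖∑ σ ∈ s, (a σ) ⊗ₖ ((a σ).map 𝕔)‖ := by
          rw [Fintype.card_fin]; ring
  have hB : ‖∑ σ ∈ s, (y σ)ᴴ * y σ‖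
      ≤ (Real.sqrt m * Real.sqrt n) * ‖∑ σ ∈ s, (b σ) ⊗ₖ ((b σ).map 𝕔)‖ := by
    rw [hyy]
    have hbT : ∑ σ ∈ s, ((b σ)ᴴ) ⊗ₖ (((b σ)ᴴ).map 𝕔)
        = (∑ σ ∈ s, (b σ) ⊗ₖ ((b σ).map 𝕔))ᴴ := by
      rw [Matrix.conjTranspose_sum]
      exact Finset.sum_congr rfl fun σ _ => by
        rw [kron_conjTranspose, map_conj_conjTranspose]
    calc ‖(1 : Matrix (Fin m) (Fin m) ℂ) ⊗ₖ ((∑ σ ∈ s, (b σ)ᴴ * ((b σ)ᴴ)ᴴ).map 𝕔)‖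
        ≤ Real.sqrt (frobSq ((1 : Matrix (Fin m) (Fin m) ℂ) ⊗ₖ
            ((∑ σ ∈ s, (b σ)ᴴ * ((b σ)ᴴ)ᴴ).map 𝕔))) := opNorm_le_sqrt_frobSq _
      _ = Real.sqrt m * Real.sqrt (frobSq (∑ σ ∈ s, (b σ)ᴴ * ((b σ)ᴴ)ᴴ)) := by
          rw [frobSq_kronecker, frobSq_one, frobSq_map_conj,
            Real.sqrt_mul (by positivity : (0:ℝ) ≤ (Fintype.card (Fin m) : ℝ))]
          simp
      _ ≤ Real.sqrt m * (Real.sqrt (Fintype.card (Fin n)) *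
            ‖∑ σ ∈ s, ((b σ)ᴴ) ⊗ₖ (((b σ)ᴴ).map 𝕔)‖) := by
          apply mul_le_mul_of_nonneg_left
            (sqrt_frobSq_le s (fun σ => (b σ)ᴴ) (fun σ => (b σ)ᴴ)) (Real.sqrt_nonneg _)
      _ = (Real.sqrt m * Real.sqrt n) * ‖∑ σ ∈ s, (b σ) ⊗ₖ ((b σ).map 𝕔)‖ := by
          rw [hbT, Matrix.l2_opNorm_conjTranspose, Fintype.card_fin]; ring
  have hcs := norm_sum_mul_le s x y
  have hsum : ∑ σ ∈ s, x σ * y σ = ∑ σ ∈ s, (a σ) ⊗ₖ ((b σ).map 𝕔) :=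
    Finset.sum_congr rfl fun σ _ => h0 σ
  rw [hsum] at hcs
  refine hcs.trans ?_
  set c : ℝ := Real.sqrt m * Real.sqrt n with hc
  have hc0 : 0 ≤ c := by positivity
  calc Real.sqrt ‖∑ σ ∈ s, x σ * (x σ)ᴴ‖ * Real.sqrt ‖∑ σ ∈ s, (y σ)ᴴ * y σ‖
      ≤ Real.sqrt (c * ‖∑ σ ∈ s, (a σ) ⊗ₖ ((a σ).map 𝕔)‖) *
        Real.sqrt (c * ‖∑ σ ∈ s, (b σ) ⊗ₖ ((b σ).map 𝕔)‖) := by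
        exact mul_le_mul (Real.sqrt_le_sqrt hA) (Real.sqrt_le_sqrt hB)
          (Real.sqrt_nonneg _) (Real.sqrt_nonneg _)
    _ = c * (Real.sqrt ‖∑ σ ∈ s, (a σ) ⊗ₖ ((a σ).map 𝕔)‖ *
          Real.sqrt ‖∑ σ ∈ s, (b σ) ⊗ₖ ((b σ).map 𝕔)‖) := by
        rw [Real.sqrt_mul hc0, Real.sqrt_mul hc0]
        rw [show ∀ s1 s2 : ℝ, (Real.sqrt c * s1) * (Real.sqrt c * s2)
            = (Real.sqrt c * Real.sqrt c) * (s1 * s2) from fun _ _ => by ring]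
        rw [Real.mul_self_sqrt hc0]

/-- One improvement step: a uniform constant `K` can be improved to `√K`. -/
lemma step (m n : ℕ) (K : ℝ) (hK : 0 ≤ K)
    (h : ∀ {κ : Type u} (s : Finset κ) (a : κ → Matrix (Fin m) (Fin m) ℂ)
        (b : κ → Matrix (Fin n) (Fin n) ℂ),
        ‖∑ σ ∈ s, (a σ) ⊗ₖ ((b σ).map 𝕔)‖ ≤
          K * (Real.sqrt ‖∑ σ ∈ s, (a σ) ⊗ₖ ((a σ).map 𝕔)‖ *
               Real.sqrt ‖∑ σ ∈ s, (b σ) ⊗ₖ ((b σ).map 𝕔)‖))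
    {κ : Type u} (s : Finset κ) (a : κ → Matrix (Fin m) (Fin m) ℂ)
    (b : κ → Matrix (Fin n) (Fin n) ℂ) :
    ‖∑ σ ∈ s, (a σ) ⊗ₖ ((b σ).map 𝕔)‖ ≤
      Real.sqrt K * (Real.sqrt ‖∑ σ ∈ s, (a σ) ⊗ₖ ((a σ).map 𝕔)‖ *
        Real.sqrt ‖∑ σ ∈ s, (b σ) ⊗ₖ ((b σ).map 𝕔)‖) := by
  have hC2 : ‖∑ σ ∈ s, (a σ) ⊗ₖ ((b σ).map 𝕔)‖ ^ 2
      = ‖∑ τ ∈ s ×ˢ s, (a τ.1 * (a τ.2)ᴴ) ⊗ₖ ((b τ.1 * (b τ.2)ᴴ).map 𝕔)‖ := by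
    rw [← prod_identity s a a b b, norm_mul_conjTranspose_self, pow_two]
  have hA2 : ‖∑ τ ∈ s ×ˢ s, (a τ.1 * (a τ.2)ᴴ) ⊗ₖ ((a τ.1 * (a τ.2)ᴴ).map 𝕔)‖
      = ‖∑ σ ∈ s, (a σ) ⊗ₖ ((a σ).map 𝕔)‖ * ‖∑ σ ∈ s, (a σ) ⊗ₖ ((a σ).map 𝕔)‖ := by
    rw [← prod_identity s a a a a, norm_mul_conjTranspose_self]
  have hB2 : ‖∑ τ ∈ s ×ˢ s, (b τ.1 * (b τ.2)ᴴ) ⊗ₖ ((b τ.1 * (b τ.2)ᴴ).map 𝕔)‖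
      = ‖∑ σ ∈ s, (b σ) ⊗ₖ ((b σ).map 𝕔)‖ * ‖∑ σ ∈ s, (b σ) ⊗ₖ ((b σ).map 𝕔)‖ := by
    rw [← prod_identity s b b b b, norm_mul_conjTranspose_self]
  have h1 := h (s ×ˢ s) (fun τ => a τ.1 * (a τ.2)ᴴ) (fun τ => b τ.1 * (b τ.2)ᴴ)
  rw [hA2, hB2, Real.sqrt_mul_self (norm_nonneg _), Real.sqrt_mul_self (norm_nonneg _)] at h1
  have h2 : ‖∑ σ ∈ s, (a σ) ⊗ₖ ((b σ).map 𝕔)‖ ^ 2 ≤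
      K * (‖∑ σ ∈ s, (a σ) ⊗ₖ ((a σ).map 𝕔)‖ * ‖∑ σ ∈ s, (b σ) ⊗ₖ ((b σ).map 𝕔)‖) := by
    rw [hC2]; exact h1
  calc ‖∑ σ ∈ s, (a σ) ⊗ₖ ((b σ).map 𝕔)‖
      = Real.sqrt (‖∑ σ ∈ s, (a σ) ⊗ₖ ((b σ).map 𝕔)‖ ^ 2) :=
        (Real.sqrt_sq (norm_nonneg _)).symm
    _ ≤ Real.sqrt (K * (‖∑ σ ∈ s, (a σ) ⊗ₖ ((a σ).map 𝕔)‖ *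
          ‖∑ σ ∈ s, (b σ) ⊗ₖ ((b σ).map 𝕔)‖)) := Real.sqrt_le_sqrt h2
    _ = Real.sqrt K * (Real.sqrt ‖∑ σ ∈ s, (a σ) ⊗ₖ ((a σ).map 𝕔)‖ *
          Real.sqrt ‖∑ σ ∈ s, (b σ) ⊗ₖ ((b σ).map 𝕔)‖) := by
        rw [Real.sqrt_mul hK, Real.sqrt_mul (norm_nonneg _)]

/-- Iterating the improvement starting from the crude bound. -/
lemma iter (m n : ℕ) (j : ℕ) : ∀ {κ : Type u} (s : Finset κ)
    (a : κ → Matrix (Fin m) (Fin m) ℂ) (b : κ → Matrix (Fin n) (Fin n) ℂ),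
    ‖∑ σ ∈ s, (a σ) ⊗ₖ ((b σ).map 𝕔)‖ ≤
      (max (Real.sqrt m * Real.sqrt n) 1) ^ ((1/2 : ℝ) ^ j) *
        (Real.sqrt ‖∑ σ ∈ s, (a σ) ⊗ₖ ((a σ).map 𝕔)‖ *
         Real.sqrt ‖∑ σ ∈ s, (b σ) ⊗ₖ ((b σ).map 𝕔)‖) := by
  induction j with
  | zero =>
      intro κ s a b
      rw [pow_zero, Real.rpow_one]
      exact (crude m n s a b).trans
        (mul_le_mul_of_nonneg_right (le_max_left _ _) (by positivity))
  | succ j ih =>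
      intro κ s a b
      have hK : (0:ℝ) ≤ (max (Real.sqrt m * Real.sqrt n) 1) ^ ((1/2 : ℝ) ^ j) :=
        Real.rpow_nonneg (by positivity) _
      have hs := step m n _ hK (fun {κ} s a b => ih s a b) s a b
      refine hs.trans (le_of_eq ?_)
      congr 1
      rw [Real.sqrt_eq_rpow, ← Real.rpow_mul (by positivity), pow_succ]

end Main

end

end HaagerupAux

/-- Haagerup's tensor norm inequality: for finitely many matrices
`a σ ∈ M_m(ℂ)`, `b σ ∈ M_n(ℂ)`,
`‖Σ a_σ ⊗ conj(b_σ)‖ ≤ ‖Σ a_σ ⊗ conj(a_σ)‖^{1/2} ‖Σ b_σ ⊗ conj(b_σ)‖^{1/2}`,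
with entrywise complex conjugates and `L²` operator norms. -/
theorem stmt_4 {ι : Type*} (s : Finset ι) (m n : ℕ)
    (a : ι → Matrix (Fin m) (Fin m) ℂ) (b : ι → Matrix (Fin n) (Fin n) ℂ) :
    ‖∑ σ ∈ s, (a σ) ⊗ₖ ((b σ).map (starRingEnd ℂ))‖ ≤
      Real.sqrt ‖∑ σ ∈ s, (a σ) ⊗ₖ ((a σ).map (starRingEnd ℂ))‖ *
      Real.sqrt ‖∑ σ ∈ s, (b σ) ⊗ₖ ((b σ).map (starRingEnd ℂ))‖ := by
  have hj := fun j : ℕ => HaagerupAux.iter m n j s a b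
  have hne : (max (Real.sqrt m * Real.sqrt n) 1 : ℝ) ≠ 0 := by positivity
  have h1 : Filter.Tendsto (fun j : ℕ => ((1:ℝ)/2) ^ j) Filter.atTop (nhds 0) :=
    tendsto_pow_atTop_nhds_zero_of_lt_one (by norm_num) (by norm_num)
  have h2 : ContinuousAt (fun e : ℝ => (max (Real.sqrt m * Real.sqrt n) 1 : ℝ) ^ e) 0 :=
    Real.continuousAt_const_rpow hne
  have h3 := h2.tendsto.comp h1
  rw [Real.rpow_zero] at h3
  have hlim := h3.mul_const
    (Real.sqrt ‖∑ σ ∈ s, (a σ) ⊗ₖ ((a σ).map (starRingEnd ℂ))‖ *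
     Real.sqrt ‖∑ σ ∈ s, (b σ) ⊗ₖ ((b σ).map (starRingEnd ℂ))‖)
  have hfin := ge_of_tendsto' hlim hj
  rw [one_mul] at hfin
  exact hfin
end

section
/- With Ω a cyclic separating vector for a von Neumann algebra M with modular operator Δ and conjugation J, for any a ∈ Mₙ(M) the matrix of inner products satisfies ⟨Δ^{1/4} a_{ij} Ω, Δ^{1/4} a_{kl} Ω⟩ = ⟨a_{ij} J a_{kl} J* Ω, Ω⟩; consequently ‖(⟨Δ^{1/4}a_{ij}Ω, Δ^{1/4}a_{kl}Ω⟩)_{(i,k)(j,l)}‖_{M_{n²}} ≤ ‖a‖²_{Mₙ(M)}, i.e., the L² embedding Φ₂ : x ↦ Δ^{1/4} x Ω is completely bounded from M into L²(M) with the OH operator space structure, with ‖Φ₂‖_{cb} ≤ 1. -/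
open scoped ComplexInnerProductSpace Matrix.Norms.L2Operator

/-- `T` is the operator on the column Hilbert space `H^n = ℓ²(Fin n; H)` implemented by the
operator matrix `a`, i.e. the amplification realizing `a ∈ Mₙ(B(H))`. -/
def ImplementsMat {H : Type*} [NormedAddCommGroup H] [InnerProductSpace ℂ H] {n : ℕ}
    (a : Matrix (Fin n) (Fin n) (H →L[ℂ] H))
    (T : (PiLp 2 fun _ : Fin n => H) →L[ℂ] PiLp 2 fun _ : Fin n => H) : Prop :=
  ∀ (ξ : PiLp 2 fun _ : Fin n => H) (i : Fin n),
    (WithLp.equiv 2 _) (T ξ) i = ∑ j, a i j ((WithLp.equiv 2 _) ξ j)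

private instance piLp_completeSpace {ι : Type*} {β : ι → Type*} {p : ENNReal}
    [∀ i, UniformSpace (β i)] [∀ i, CompleteSpace (β i)] : CompleteSpace (PiLp p β) :=
  inferInstance

private lemma sum4_swap {n : ℕ} (f : Fin n → Fin n → Fin n → Fin n → ℂ) :
    ∑ p₁, ∑ p₂, ∑ q₁, ∑ q₂, f p₁ p₂ q₁ q₂ = ∑ q₁, ∑ p₂, ∑ p₁, ∑ q₂, f p₁ p₂ q₁ q₂ :=
  calc ∑ p₁, ∑ p₂, ∑ q₁, ∑ q₂, f p₁ p₂ q₁ q₂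
      = ∑ p₂, ∑ p₁, ∑ q₁, ∑ q₂, f p₁ p₂ q₁ q₂ := Finset.sum_comm
    _ = ∑ p₂, ∑ q₁, ∑ p₁, ∑ q₂, f p₁ p₂ q₁ q₂ :=
        Finset.sum_congr rfl fun p₂ _ => Finset.sum_comm
    _ = ∑ q₁, ∑ p₂, ∑ p₁, ∑ q₂, f p₁ p₂ q₁ q₂ := Finset.sum_comm

private lemma norm_le_of_sq {x c : ℝ} (hx : 0 ≤ x) (hc : 0 ≤ c) (h : x ^ 2 ≤ c ^ 2) :
    x ≤ c := by nlinarith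

/-- with `Ω` cyclic separating for `M`, modular operator `Δ` and conjugation
`J` (`A14 = Δ^{1/4}`, `A12 = Δ^{1/2}` on `MΩ`), for any `a ∈ Mₙ(M)`:
`⟨Δ^{1/4}a_{ij}Ω, Δ^{1/4}a_{kl}Ω⟩ = ⟨a_{ij} J a_{kl} J* Ω, Ω⟩`, and consequently the
operator norm of the `n²×n²` Gram matrix is at most `‖a‖²_{Mₙ(M)}` (the norm of the
operator `T` implementing `a` on `H^n`): the `L²` embedding `Φ₂ : x ↦ Δ^{1/4}xΩ` is
completely bounded into `L²(M)` with the `OH` structure, `‖Φ₂‖_cb ≤ 1`.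
(Paper's `⟨u,v⟩`, linear in the first variable, is Mathlib's `⟪v,u⟫`.) -/
theorem stmt_6
    {H : Type*} [NormedAddCommGroup H] [InnerProductSpace ℂ H] [CompleteSpace H]
    (M : VonNeumannAlgebra H) (Ω : H) (hΩ : ‖Ω‖ = 1)
    (J : H →ₗ⋆[ℂ] H) (A14 A12 : H →ₗ[ℂ] H)
    (hJiso : ∀ ξ η : H, ⟪J ξ, J η⟫ = ⟪η, ξ⟫)
    (hJinv : ∀ ξ : H, J (J ξ) = ξ)
    (hJΩ : J Ω = Ω)
    (hhalf : ∀ x y : H →L[ℂ] H, x ∈ M → y ∈ M →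
      ⟪A14 (x Ω), A14 (y Ω)⟫ = ⟪x Ω, A12 (y Ω)⟫)
    (hmod : ∀ x : H →L[ℂ] H, x ∈ M →
      A12 (x Ω) = J (ContinuousLinearMap.adjoint x Ω))
    -- `J M J ⊆ M'`
    (hcomm : ∀ x y : H →L[ℂ] H, x ∈ M → y ∈ M → ∀ ξ : H,
      x (J (y (J ξ))) = J (y (J (x ξ))))
    (n : ℕ) (a : Matrix (Fin n) (Fin n) (H →L[ℂ] H)) (ha : ∀ i j, a i j ∈ M)
    (T : (PiLp 2 fun _ : Fin n => H) →L[ℂ] PiLp 2 fun _ : Fin n => H)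
    (hT : ImplementsMat a T) :
    (∀ i j k l, ⟪A14 (a k l Ω), A14 (a i j Ω)⟫ = ⟪Ω, a i j (J (a k l (J Ω)))⟫) ∧
    ‖(Matrix.of fun (p q : Fin n × Fin n) =>
        ⟪A14 (a p.2 q.2 Ω), A14 (a p.1 q.1 Ω)⟫)‖ ≤ ‖T‖ ^ 2 := by
  classical
  -- `J` is isometric
  have hJnorm : ∀ ξ : H, ‖J ξ‖ = ‖ξ‖ := by
    intro ξ
    have h := hJiso ξ ξ
    rw [inner_self_eq_norm_sq_to_K, inner_self_eq_norm_sq_to_K] at h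
    have h2 : ‖J ξ‖ ^ 2 = ‖ξ‖ ^ 2 := by exact_mod_cast h
    exact (norm_le_of_sq (norm_nonneg _) (norm_nonneg _) h2.le).antisymm
      (norm_le_of_sq (norm_nonneg _) (norm_nonneg _) h2.ge)
  -- Part 1: the Gram identity
  have gram : ∀ i j k l, ⟪A14 (a k l Ω), A14 (a i j Ω)⟫ = ⟪Ω, a i j (J (a k l (J Ω)))⟫ := by
    intro i j k l
    have e1 : ⟪A14 (a k l Ω), A14 (a i j Ω)⟫
        = ⟪a k l Ω, J (ContinuousLinearMap.adjoint (a i j) Ω)⟫ := by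
      rw [hhalf _ _ (ha k l) (ha i j), hmod _ (ha i j)]
    have e2 : ⟪a k l Ω, J (ContinuousLinearMap.adjoint (a i j) Ω)⟫
        = ⟪ContinuousLinearMap.adjoint (a i j) Ω, J (a k l Ω)⟫ := by
      conv_lhs => rw [← hJinv (a k l Ω)]
      exact hJiso _ _
    rw [e1, e2, hJΩ, ContinuousLinearMap.adjoint_inner_left]
  refine ⟨gram, ?_⟩
  -- Part 2: the norm bound
  set N := Fin n × Fin n
  set Gmat : Matrix N N ℂ :=
    Matrix.of fun p q : N => ⟪A14 (a p.2 q.2 Ω), A14 (a p.1 q.1 Ω)⟫ with hGmatdef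
  have hG : ∀ p q : N,
      Gmat p q = ⟪ContinuousLinearMap.adjoint (a p.1 q.1) Ω, J (a p.2 q.2 Ω)⟫ := by
    intro p q
    show ⟪A14 (a p.2 q.2 Ω), A14 (a p.1 q.1 Ω)⟫ = _
    rw [gram p.1 q.1 p.2 q.2, hJΩ]
    exact (ContinuousLinearMap.adjoint_inner_left _ _ _).symm
  have hT' : ∀ (ξ : PiLp 2 fun _ : Fin n => H) (i : Fin n), (T ξ) i = ∑ j, a i j (ξ j) := hT
  -- the adjoint of `T` is implemented by the adjoint matrix
  have hTadj : ∀ (η : PiLp 2 fun _ : Fin n => H) (q : Fin n),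
      (ContinuousLinearMap.adjoint T η) q
        = ∑ p, ContinuousLinearMap.adjoint (a p q) (η p) := by
    intro η q
    have h : ContinuousLinearMap.adjoint T η
        = (show PiLp 2 fun _ : Fin n => H from
            WithLp.toLp 2 fun q => ∑ p, ContinuousLinearMap.adjoint (a p q) (η p)) := by
      refine ext_inner_right ℂ fun ζ => ?_
      rw [ContinuousLinearMap.adjoint_inner_left, PiLp.inner_apply, PiLp.inner_apply]
      calc ∑ i, ⟪η i, (T ζ) i⟫
          = ∑ i, ∑ j, ⟪ContinuousLinearMap.adjoint (a i j) (η i), ζ j⟫ := by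
            refine Finset.sum_congr rfl fun i _ => ?_
            rw [hT' ζ i, inner_sum]
            exact Finset.sum_congr rfl fun j _ =>
              (ContinuousLinearMap.adjoint_inner_left _ _ _).symm
        _ = ∑ j, ∑ i, ⟪ContinuousLinearMap.adjoint (a i j) (η i), ζ j⟫ := Finset.sum_comm
        _ = ∑ j, ⟪∑ p, ContinuousLinearMap.adjoint (a p j) (η p), ζ j⟫ := by
            exact Finset.sum_congr rfl fun j _ => (sum_inner _ _ _).symm
    rw [h]
  -- the key pairing estimate
  have pair : ∀ φ ψ : EuclideanSpace ℂ N,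
      ‖∑ p : N, ∑ q : N, (starRingEnd ℂ) (φ p) * (Gmat p q * ψ q)‖
        ≤ ‖T‖ ^ 2 * (‖φ‖ * ‖ψ‖) := by
    intro φ ψ
    set F : PiLp 2 fun _ : N => H :=
      (show PiLp 2 fun _ : N => H from
        WithLp.toLp 2 fun (r : N) => ∑ p₁, φ (p₁, r.2) • ContinuousLinearMap.adjoint (a p₁ r.1) Ω) with hF
    set Gv : PiLp 2 fun _ : N => H :=
      (show PiLp 2 fun _ : N => H from
        WithLp.toLp 2 fun (r : N) => ∑ q₂, ψ (r.1, q₂) • J (a r.2 q₂ Ω)) with hGv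
    have hS : ∑ p : N, ∑ q : N, (starRingEnd ℂ) (φ p) * (Gmat p q * ψ q) = ⟪F, Gv⟫ := by
      rw [PiLp.inner_apply]
      calc ∑ p : N, ∑ q : N, (starRingEnd ℂ) (φ p) * (Gmat p q * ψ q)
          = ∑ p₁, ∑ p₂, ∑ q₁, ∑ q₂, (starRingEnd ℂ) (φ (p₁, p₂)) * ψ (q₁, q₂) *
              ⟪ContinuousLinearMap.adjoint (a p₁ q₁) Ω, J (a p₂ q₂ Ω)⟫ := by
            rw [Fintype.sum_prod_type]
            refine Finset.sum_congr rfl fun p₁ _ => ?_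
            refine Finset.sum_congr rfl fun p₂ _ => ?_
            rw [Fintype.sum_prod_type]
            refine Finset.sum_congr rfl fun q₁ _ => ?_
            refine Finset.sum_congr rfl fun q₂ _ => ?_
            rw [hG]
            ring
        _ = ∑ q₁, ∑ p₂, ∑ p₁, ∑ q₂, (starRingEnd ℂ) (φ (p₁, p₂)) * ψ (q₁, q₂) *
              ⟪ContinuousLinearMap.adjoint (a p₁ q₁) Ω, J (a p₂ q₂ Ω)⟫ := sum4_swap _
        _ = ∑ r : N, ⟪F r, Gv r⟫ := by
            rw [Fintype.sum_prod_type]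
            refine Finset.sum_congr rfl fun q₁ _ => ?_
            refine Finset.sum_congr rfl fun p₂ _ => ?_
            rw [hF, hGv]
            rw [sum_inner]
            refine Finset.sum_congr rfl fun p₁ _ => ?_
            rw [inner_sum]
            refine Finset.sum_congr rfl fun q₂ _ => ?_
            rw [inner_smul_left, inner_smul_right]
            ring
    have hFnorm : ‖F‖ ≤ ‖T‖ * ‖φ‖ := by
      refine norm_le_of_sq (norm_nonneg _)
        (mul_nonneg (norm_nonneg _) (norm_nonneg _)) ?_
      rw [PiLp.norm_sq_eq_of_L2, mul_pow]
      calc ∑ r : N, ‖F r‖ ^ 2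
          = ∑ p₂, ∑ q₁, ‖F (q₁, p₂)‖ ^ 2 := by
            rw [Fintype.sum_prod_type]; exact Finset.sum_comm
        _ ≤ ∑ p₂, ‖T‖ ^ 2 * ∑ p₁, ‖φ (p₁, p₂)‖ ^ 2 := by
            refine Finset.sum_le_sum fun p₂ _ => ?_
            set η : PiLp 2 fun _ : Fin n => H :=
              (show PiLp 2 fun _ : Fin n => H from WithLp.toLp 2 fun p₁ => φ (p₁, p₂) • Ω) with hη
            have hcomp : ∀ q₁, F (q₁, p₂) = ContinuousLinearMap.adjoint T η q₁ := by
              intro q₁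
              rw [hTadj η q₁, hF]
              dsimp only [WithLp.ofLp_toLp]
              refine Finset.sum_congr rfl fun p₁ _ => ?_
              rw [hη]
              exact (ContinuousLinearMap.map_smul _ _ _).symm
            calc ∑ q₁, ‖F (q₁, p₂)‖ ^ 2
                = ∑ q₁, ‖ContinuousLinearMap.adjoint T η q₁‖ ^ 2 := by
                  exact Finset.sum_congr rfl fun q₁ _ => by rw [hcomp]
              _ = ‖ContinuousLinearMap.adjoint T η‖ ^ 2 :=
                  (PiLp.norm_sq_eq_of_L2 _ _).symm
              _ ≤ (‖ContinuousLinearMap.adjoint T‖ * ‖η‖) ^ 2 := by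
                  have := (ContinuousLinearMap.adjoint T).le_opNorm η
                  exact pow_le_pow_left₀ (norm_nonneg _) this 2
              _ = ‖T‖ ^ 2 * ∑ p₁, ‖φ (p₁, p₂)‖ ^ 2 := by
                  rw [mul_pow, LinearIsometryEquiv.norm_map, PiLp.norm_sq_eq_of_L2]
                  congr 1
                  refine Finset.sum_congr rfl fun p₁ _ => ?_
                  rw [hη]
                  simp [norm_smul, hΩ]
        _ = ‖T‖ ^ 2 * ‖φ‖ ^ 2 := by
            rw [← Finset.mul_sum, PiLp.norm_sq_eq_of_L2, Fintype.sum_prod_type]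
            congr 1
            exact Finset.sum_comm
    have hGnorm : ‖Gv‖ ≤ ‖T‖ * ‖ψ‖ := by
      refine norm_le_of_sq (norm_nonneg _)
        (mul_nonneg (norm_nonneg _) (norm_nonneg _)) ?_
      rw [PiLp.norm_sq_eq_of_L2, mul_pow]
      calc ∑ r : N, ‖Gv r‖ ^ 2
          = ∑ q₁, ∑ p₂, ‖Gv (q₁, p₂)‖ ^ 2 := Fintype.sum_prod_type _
        _ ≤ ∑ q₁, ‖T‖ ^ 2 * ∑ q₂, ‖ψ (q₁, q₂)‖ ^ 2 := by
            refine Finset.sum_le_sum fun q₁ _ => ?_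
            set ζ : PiLp 2 fun _ : Fin n => H :=
              (show PiLp 2 fun _ : Fin n => H from
                WithLp.toLp 2 fun q₂ => (starRingEnd ℂ) (ψ (q₁, q₂)) • Ω) with hζ
            have hcomp : ∀ p₂, Gv (q₁, p₂) = J ((T ζ) p₂) := by
              intro p₂
              rw [hT' ζ p₂, map_sum, hGv]
              dsimp only [WithLp.ofLp_toLp]
              refine Finset.sum_congr rfl fun q₂ _ => ?_
              rw [hζ]
              dsimp only [WithLp.ofLp_toLp]
              rw [ContinuousLinearMap.map_smul, LinearMap.map_smulₛₗ]
              simp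
            calc ∑ p₂, ‖Gv (q₁, p₂)‖ ^ 2
                = ∑ p₂, ‖(T ζ) p₂‖ ^ 2 := by
                  exact Finset.sum_congr rfl fun p₂ _ => by rw [hcomp, hJnorm]
              _ = ‖T ζ‖ ^ 2 := (PiLp.norm_sq_eq_of_L2 _ _).symm
              _ ≤ (‖T‖ * ‖ζ‖) ^ 2 :=
                  pow_le_pow_left₀ (norm_nonneg _) (T.le_opNorm ζ) 2
              _ = ‖T‖ ^ 2 * ∑ q₂, ‖ψ (q₁, q₂)‖ ^ 2 := by
                  rw [mul_pow, PiLp.norm_sq_eq_of_L2]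
                  congr 1
                  refine Finset.sum_congr rfl fun q₂ _ => ?_
                  rw [hζ]
                  simp [norm_smul, hΩ]
        _ = ‖T‖ ^ 2 * ‖ψ‖ ^ 2 := by
            rw [← Finset.mul_sum, PiLp.norm_sq_eq_of_L2, Fintype.sum_prod_type]
    calc ‖∑ p : N, ∑ q : N, (starRingEnd ℂ) (φ p) * (Gmat p q * ψ q)‖
        = ‖⟪F, Gv⟫‖ := by rw [hS]
      _ ≤ ‖F‖ * ‖Gv‖ := norm_inner_le_norm _ _
      _ ≤ (‖T‖ * ‖φ‖) * (‖T‖ * ‖ψ‖) :=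
          mul_le_mul hFnorm hGnorm (norm_nonneg _)
            (mul_nonneg (norm_nonneg _) (norm_nonneg _))
      _ = ‖T‖ ^ 2 * (‖φ‖ * ‖ψ‖) := by ring
  -- conclude
  rw [Matrix.l2_opNorm_def]
  refine ContinuousLinearMap.opNorm_le_bound _ (pow_nonneg (norm_nonneg T) 2) fun ψ => ?_
  set L := (Matrix.toEuclideanLin.trans LinearMap.toContinuousLinearMap) Gmat
  have hL : ∀ p : N, (L ψ) p = ∑ q, Gmat p q * ψ q := by
    intro p
    show (Matrix.toEuclideanLin Gmat ψ) p = _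
    rw [Matrix.toEuclideanLin_apply]
    simp [Matrix.mulVec, dotProduct]
  have hinner : ⟪L ψ, L ψ⟫
      = ∑ p : N, ∑ q : N, (starRingEnd ℂ) ((L ψ) p) * (Gmat p q * ψ q) := by
    rw [PiLp.inner_apply]
    refine Finset.sum_congr rfl fun p _ => ?_
    rw [← Finset.mul_sum, ← hL p]
    exact (RCLike.inner_apply _ _).trans (mul_comm _ _)
  have hb := pair (L ψ) ψ
  have hre : (‖L ψ‖ : ℝ) ^ 2 ≤ ‖T‖ ^ 2 * (‖L ψ‖ * ‖ψ‖) := by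
    calc (‖L ψ‖ : ℝ) ^ 2
        = ‖(⟪L ψ, L ψ⟫ : ℂ)‖ := by
          rw [inner_self_eq_norm_sq_to_K]
          simp
      _ = ‖∑ p : N, ∑ q : N, (starRingEnd ℂ) ((L ψ) p) * (Gmat p q * ψ q)‖ := by
          rw [hinner]
      _ ≤ ‖T‖ ^ 2 * (‖L ψ‖ * ‖ψ‖) := hb
  by_cases h0 : ‖L ψ‖ = 0
  · rw [h0]
    positivity
  · have hpos : 0 < ‖L ψ‖ := lt_of_le_of_ne (norm_nonneg _) (Ne.symm h0)
    nlinarith [norm_nonneg ψ, norm_nonneg (L ψ)]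
end
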